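/- Fix a real α > −1. For every μ > 0 there exist positive constants C = C(μ) and Ω = Ω(μ) such that for every integer N with N ≥ 1/(4μ) and all complex numbers z₁, z₂ with Re z₁ > 0, Re z₂ > 0, Im z₁ ≥ μ and Im z₂ ≥ μ, one has (1/N)·| K̃_N(z₁, z₂, 1/(4N)) | ≤ C · Ω^{2N−2} · Γ(2P+1) · (Im z₁)^{P+1/2} · (Im z₂)^{P+1/2}, where P = N + ⌊(α−1)/2⌋ + 1 and ⌊·⌋ denotes the integer part. (Uniform upper bound for the rescaled LUE correlation kernel in the upper half plane.) -/

import Mathlib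

open MeasureTheory Filter Topology Finset
open scoped Real Classical

noncomputable section

namespace RMT

/-- Extend a finite tuple by zero. -/
def extFun {n : ℕ} (t : Fin n → ℝ) : ℕ → ℝ := fun k => if h : k < n then t ⟨k, h⟩ else 0

/-- Squared Vandermonde determinant ∏_{i<j} (x_j - x_i)². -/
def vdm2 {N : ℕ} (x : Fin N → ℝ) : ℝ :=
  ∏ p ∈ Finset.univ.filter (fun p : Fin N × Fin N => p.1 < p.2), (x p.2 - x p.1) ^ 2

/-- Laguerre weight ∏ xᵢ^α (real power). -/
def lagWeight (α : ℝ) {N : ℕ} (x : Fin N → ℝ) : ℝ := ∏ i, x i ^ α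

/-- Partition function of the fixed trace LUE:
`Z_δ^r = r^{N(N+α)} ∏_{j=1}^N Γ(1+j)Γ(α+j) / Γ(N(N+α))`. -/
def ftlueZ (α : ℝ) (N : ℕ) (r : ℝ) : ℝ :=
  r ^ ((N : ℝ) * ((N : ℝ) + α)) *
    (∏ j ∈ Finset.range N, Real.Gamma (1 + ((j : ℝ) + 1)) * Real.Gamma (α + ((j : ℝ) + 1))) /
      Real.Gamma ((N : ℝ) * ((N : ℝ) + α))

/-- The full eigenvalue vector for the fixed trace LUE: the first `n` coordinates are the fixed
arguments `t`, the next `N-1-n` coordinates are the integration variables `y`, and the last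
coordinate is `r - ∑ t - ∑ y`. -/
def ftlueVec (N n : ℕ) (r : ℝ) (t : Fin n → ℝ) (y : Fin (N - 1 - n) → ℝ) : Fin N → ℝ :=
  fun i =>
    if (i : ℕ) < n then extFun t (i : ℕ)
    else if (i : ℕ) < N - 1 then extFun y ((i : ℕ) - n)
    else r - (∑ j, t j) - (∑ k, y k)

/-- `n`-point correlation function of the fixed trace LUE (FTLUE) with trace `r`. -/
def ftlueR (α : ℝ) (N n : ℕ) (r : ℝ) (t : Fin n → ℝ) : ℝ :=
  if (∀ i, 0 ≤ t i) ∧ (∑ i, t i) ≤ r then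
    ((N.factorial : ℝ) / ((N - n).factorial : ℝ)) / ftlueZ α N r *
      ∫ y : Fin (N - 1 - n) → ℝ,
        (if (∀ k, 0 ≤ y k) ∧ (∑ i, t i) + (∑ k, y k) ≤ r then
          vdm2 (ftlueVec N n r t y) * lagWeight α (ftlueVec N n r t y) else 0)
  else 0

/-- Full eigenvalue vector for ensembles where all of `x_{n+1},…,x_N` are integrated. -/
def fullVec (N n : ℕ) (t : Fin n → ℝ) (y : Fin (N - n) → ℝ) : Fin N → ℝ :=
  fun i => if (i : ℕ) < n then extFun t (i : ℕ) else extFun y ((i : ℕ) - n)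

/-- Partition function of the bounded trace LUE. -/
def btlueZ (α : ℝ) (N : ℕ) (r : ℝ) : ℝ :=
  ∫ x : Fin N → ℝ,
    (if (∀ i, 0 ≤ x i) ∧ (∑ i, x i) ≤ r then vdm2 x * lagWeight α x else 0)

/-- `n`-point correlation function of the bounded trace LUE (BTLUE). -/
def btlueR (α : ℝ) (N n : ℕ) (r : ℝ) (t : Fin n → ℝ) : ℝ :=
  if ∀ i, 0 ≤ t i then
    ((N.factorial : ℝ) / ((N - n).factorial : ℝ)) / btlueZ α N r *
      ∫ y : Fin (N - n) → ℝ,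
        (if (∀ k, 0 ≤ y k) ∧ (∑ i, t i) + (∑ k, y k) ≤ r then
          vdm2 (fullVec N n t y) * lagWeight α (fullVec N n t y) else 0)
  else 0

/-- Partition function of the LUE with scale `s`. -/
def lueZ (α : ℝ) (N : ℕ) (s : ℝ) : ℝ :=
  s ^ ((N : ℝ) * ((N : ℝ) + α)) *
    ∏ j ∈ Finset.range N, Real.Gamma (1 + ((j : ℝ) + 1)) * Real.Gamma (α + ((j : ℝ) + 1))

/-- Joint eigenvalue density of the LUE with scale `s`. -/
def luePdf (α : ℝ) (N : ℕ) (s : ℝ) (x : Fin N → ℝ) : ℝ :=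
  if ∀ i, 0 ≤ x i then
    (1 / lueZ α N s) * vdm2 x * ∏ i, x i ^ α * Real.exp (-(x i) / s)
  else 0

/-- `n`-point correlation function of the LUE with scale `s`. -/
def lueR (α : ℝ) (N n : ℕ) (s : ℝ) (t : Fin n → ℝ) : ℝ :=
  ((N.factorial : ℝ) / ((N - n).factorial : ℝ)) *
    ∫ y : Fin (N - n) → ℝ,
      (if ∀ k, 0 ≤ y k then luePdf α N s (fullVec N n t y) else 0)

/-- Gamma(N(N+α),1) density. -/
def gammaDens (α : ℝ) (N : ℕ) (x : ℝ) : ℝ :=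
  if 0 ≤ x then
    Real.exp (-x) * x ^ ((N : ℝ) * ((N : ℝ) + α) - 1) / Real.Gamma ((N : ℝ) * ((N : ℝ) + α))
  else 0

/-- Sine kernel. -/
def Ksin (u v : ℝ) : ℝ :=
  if u = v then 1 else Real.sin (π * (u - v)) / (π * (u - v))

/-- Marchenko–Pastur density. -/
def psiMP (x : ℝ) : ℝ :=
  if 0 < x ∧ x ≤ 1 then (2 / π) * Real.sqrt ((1 - x) / x) else 0

/-- Airy function, as a convergent improper integral. -/
def Ai (x : ℝ) : ℝ :=
  limUnder atTop (fun T : ℝ => (1 / π) * ∫ t in (0 : ℝ)..T, Real.cos (t ^ 3 / 3 + x * t))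

/-- Airy kernel. -/
def KAiry (u v : ℝ) : ℝ :=
  if u = v then (deriv Ai u) ^ 2 - u * (Ai u) ^ 2
  else (deriv Ai u * Ai v - deriv Ai v * Ai u) / (u - v)

/-- Bessel function of the first kind of (real) index `α`, as a power series. -/
def besselJ (α : ℝ) (x : ℝ) : ℝ :=
  ∑' m : ℕ,
    ((-1 : ℝ) ^ m / ((m.factorial : ℝ) * Real.Gamma ((m : ℝ) + α + 1))) *
      (x / 2) ^ (2 * (m : ℝ) + α)

/-- Bessel kernel off the diagonal. -/
def KBesselOff (α : ℝ) (u v : ℝ) : ℝ :=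
  (besselJ α (Real.sqrt u) * Real.sqrt v * deriv (besselJ α) (Real.sqrt v) -
      besselJ α (Real.sqrt v) * Real.sqrt u * deriv (besselJ α) (Real.sqrt u)) /
    (2 * (u - v))

/-- Bessel kernel, extended to the diagonal by its limiting value. -/
def KBessel (α : ℝ) (u v : ℝ) : ℝ :=
  if u = v then limUnder (𝓝[≠] u) (fun w => KBesselOff α u w) else KBesselOff α u v

/-- Orthonormal polynomials for the weight `x^α e^{-x}` on `(0,∞)`, at complex arguments. -/
def hkC (α : ℝ) (k : ℕ) (z : ℂ) : ℂ :=
  (Real.sqrt (Real.Gamma ((k : ℝ) + 1) / Real.Gamma ((k : ℝ) + α + 1)) : ℂ) *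
    ∑ j ∈ Finset.range (k + 1),
      (-1 : ℂ) ^ (k - j) *
        ((Real.Gamma ((k : ℝ) + α + 1) /
            (Real.Gamma ((j : ℝ) + α + 1) * ((k - j).factorial : ℝ) * (j.factorial : ℝ)) : ℝ) : ℂ) *
        z ^ j

/-- `φ_k(z) = z^{α/2} e^{-z/2} h_k(z)` (principal branch). -/
def phikC (α : ℝ) (k : ℕ) (z : ℂ) : ℂ :=
  z ^ ((α : ℂ) / 2) * Complex.exp (-z / 2) * hkC α k z

/-- Correlation kernel `K_N(z,w) = ∑_{k<N} φ_k(z) φ_k(w)`. -/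
def KNC (α : ℝ) (N : ℕ) (z w : ℂ) : ℂ := ∑ k ∈ Finset.range N, phikC α k z * phikC α k w

/-- Rescaled kernel `K̃_N(z,w,s) = s⁻¹ K_N(z/s, w/s)`. -/
def KNS (α : ℝ) (N : ℕ) (z w s : ℂ) : ℂ := s⁻¹ * KNC α N (z / s) (w / s)

/-- `Λ(H) = 1 + iH`. -/
def Lam (H : ℝ) : ℂ := 1 + Complex.I * (H : ℂ)

/-- Analytic continuation `ψ̂` of the Marchenko–Pastur density to the upper half plane,
with boundary values `ψ` on the reals. -/
def psihat (z : ℂ) : ℂ :=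
  if z.im = 0 then (psiMP z.re : ℂ)
  else (2 / (Complex.I * (π : ℂ))) * (z - 1) ^ ((1 : ℂ) / 2) / z ^ ((1 : ℂ) / 2)

/-- Characteristic function `φ_N(y) = e^{iy(N+α)} (1+iy/N)^{-N(N+α)}` (principal branch). -/
def phiN (α : ℝ) (N : ℕ) (y : ℝ) : ℂ :=
  Complex.exp (Complex.I * (y : ℂ) * (((N : ℝ) + α : ℝ) : ℂ)) *
    (1 + Complex.I * (y : ℂ) / (N : ℂ)) ^ (-((((N : ℝ) * ((N : ℝ) + α) : ℝ) : ℂ)))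

end RMT

/-!
On `Re w ≥ 0`, `Im w ≥ 1` each `φ_k` is at most `E · F^k · (Im w)^(a+k)` for any natural
`a ≥ α/2`: there `|w| ≤ (1 + Re w) Im w`, and in the `j`-th term of `h_k` the factor
`e^{-Re w/2}` absorbs `(1 + Re w)^(a+j)` at the price of `4^(a+j) a! j!`. This `j!` cancels the
`1/j!` of the coefficient, and the remaining Gamma ratios grow only geometrically in `k` since
`min 1 s ^ n n! Γ(s) ≤ Γ(n + s) ≤ max 1 s ^ n n! Γ(s)`.

Take `a = ⌊(α-1)/2⌋ + 2`, so that `P = a + N - 1`, and `w = 4N z`, where `Im w ≥ 4Nμ ≥ 1`. Each of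
the `N` terms of `K_N` is then at most a constant times `F^(2N) (4N)^(2P) (Im z₁ Im z₂)^P`, and
`n^n ≤ eⁿ n!` bounds `(4N)^(2P+1)` by `Γ(2P+1)` times a geometric factor.
-/

namespace RMT

open scoped Nat

section GammaGrowth

variable {s : ℝ}

lemma min_one_pow_mul_factorial_mul_Gamma_le (hs : 0 < s) (n : ℕ) :
    min 1 s ^ n * n ! * Real.Gamma s ≤ Real.Gamma (n + s) := by
  induction n with
  | zero => simp
  | succ n ih =>
    have hns : 0 < (n : ℝ) + s := by positivity
    have hstep : min 1 s * ((n : ℝ) + 1) ≤ n + s := by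
      rcases le_total 1 s with h | h
      · rw [min_eq_left h]; linarith
      · rw [min_eq_right h]; nlinarith [n.cast_nonneg (α := ℝ)]
    rw [Nat.cast_succ, add_right_comm, Real.Gamma_add_one hns.ne', Nat.factorial_succ,
      Nat.cast_mul, pow_succ]
    calc _ = (min 1 s * ((n : ℝ) + 1)) * (min 1 s ^ n * n ! * Real.Gamma s) := by push_cast; ring
      _ ≤ _ := mul_le_mul hstep ih (by have := Real.Gamma_pos_of_pos hs; positivity) hns.le

lemma Gamma_nat_add_le_max_one_pow_mul_factorial_mul (hs : 0 < s) (n : ℕ) :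
    Real.Gamma (n + s) ≤ max 1 s ^ n * n ! * Real.Gamma s := by
  induction n with
  | zero => simp
  | succ n ih =>
    have hns : 0 < (n : ℝ) + s := by positivity
    have hstep : (n : ℝ) + s ≤ max 1 s * (n + 1) := by
      rcases le_total 1 s with h | h
      · rw [max_eq_right h]; nlinarith [n.cast_nonneg (α := ℝ)]
      · rw [max_eq_left h]; linarith
    rw [Nat.cast_succ, add_right_comm, Real.Gamma_add_one hns.ne', Nat.factorial_succ,
      Nat.cast_mul, pow_succ]
    calc _ ≤ (max 1 s * ((n : ℝ) + 1)) * (max 1 s ^ n * n ! * Real.Gamma s) :=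
          mul_le_mul hstep ih (Real.Gamma_pos_of_pos hns).le (by positivity)
      _ = _ := by push_cast; ring

end GammaGrowth

lemma one_add_pow_mul_exp_neg_half_le {t : ℝ} (ht : 0 ≤ t) (m n : ℕ) :
    (1 + t) ^ (m + n) * Real.exp (-(t / 2)) ≤ 4 ^ (m + n) * m ! * n ! * Real.exp (1 / 2) := by
  have hu : 0 ≤ (1 + t) / 4 := by positivity
  have hm := Real.pow_div_factorial_le_exp _ hu m
  have hn := Real.pow_div_factorial_le_exp _ hu n
  rw [div_le_iff₀ (by positivity)] at hm hn
  have hexp : Real.exp ((1 + t) / 4) * Real.exp ((1 + t) / 4) * Real.exp (-(t / 2)) =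
      Real.exp (1 / 2) := by
    rw [← Real.exp_add, ← Real.exp_add]; ring_nf
  calc (1 + t) ^ (m + n) * Real.exp (-(t / 2))
      = 4 ^ (m + n) * (((1 + t) / 4) ^ m * ((1 + t) / 4) ^ n) * Real.exp (-(t / 2)) := by
        rw [← pow_add, div_pow]; field_simp
    _ ≤ 4 ^ (m + n) * ((Real.exp ((1 + t) / 4) * m !) * (Real.exp ((1 + t) / 4) * n !)) *
          Real.exp (-(t / 2)) := by gcongr
    _ = 4 ^ (m + n) * m ! * n ! * Real.exp (1 / 2) := by rw [← hexp]; ring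

def hkCoeff (α : ℝ) (k j : ℕ) : ℝ :=
  √(Real.Gamma ((k : ℝ) + 1) / Real.Gamma ((k : ℝ) + α + 1)) *
    (Real.Gamma ((k : ℝ) + α + 1) / (Real.Gamma ((j : ℝ) + α + 1) * (k - j)! * j !))

lemma norm_hkC_le (α : ℝ) (k : ℕ) (z : ℂ) :
    ‖hkC α k z‖ ≤ ∑ j ∈ range (k + 1), |hkCoeff α k j| * ‖z‖ ^ j := by
  have hsum : hkC α k z =
      ∑ j ∈ range (k + 1), (-1) ^ (k - j) * (hkCoeff α k j : ℂ) * z ^ j := by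
    simp only [hkC, hkCoeff, mul_sum, Complex.ofReal_mul]
    exact sum_congr rfl fun j _ => by ring
  rw [hsum]
  refine (norm_sum_le _ _).trans (sum_le_sum fun j _ => ?_)
  simp [Complex.norm_real]

lemma abs_hkCoeff_mul_factorial_le {α : ℝ} (hα : -1 < α) {k j : ℕ} (hjk : j ≤ k) :
    |hkCoeff α k j| * j ! ≤
      √(max 1 (α + 1)) ^ k * (k.choose j * (min 1 (α + 1))⁻¹ ^ j) / √(Real.Gamma (α + 1)) := by
  set s := α + 1
  have hs : 0 < s := by linarith
  set m := min 1 s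
  set M := max 1 s
  have hm : 0 < m := lt_min one_pos hs
  have hΓ : 0 < Real.Gamma s := Real.Gamma_pos_of_pos hs
  have hΓk : 0 < Real.Gamma (k + s) := Real.Gamma_pos_of_pos (by positivity)
  have hΓj : 0 < Real.Gamma (j + s) := Real.Gamma_pos_of_pos (by positivity)
  have hassoc : ∀ i : ℕ, (i : ℝ) + α + 1 = i + s := fun i => add_assoc _ _ _
  have hcoeff : |hkCoeff α k j| * j ! =
      √(k ! * Real.Gamma (k + s)) / (Real.Gamma (j + s) * (k - j)!) := by
    rw [hkCoeff, hassoc, hassoc, Real.Gamma_nat_eq_factorial, abs_of_nonneg (by positivity),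
      Real.sqrt_mul (by positivity), Real.sqrt_div (by positivity)]
    field_simp
    rw [Real.sq_sqrt hΓk.le]
  have hnum : √(k ! * Real.Gamma (k + s)) ≤ k ! * √M ^ k * √(Real.Gamma s) := by
    rw [← Real.sqrt_sq (by positivity : 0 ≤ (k ! : ℝ) * √M ^ k * √(Real.Gamma s))]
    refine Real.sqrt_le_sqrt ?_
    rw [mul_pow, mul_pow, ← pow_mul, mul_comm k, pow_mul, Real.sq_sqrt (by positivity),
      Real.sq_sqrt hΓ.le]
    calc (k ! : ℝ) * Real.Gamma (k + s) ≤ k ! * (M ^ k * k ! * Real.Gamma s) := by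
          gcongr; exact Gamma_nat_add_le_max_one_pow_mul_factorial_mul hs k
      _ = _ := by ring
  have hden : m ^ j * j ! * Real.Gamma s * (k - j)! ≤ Real.Gamma (j + s) * (k - j)! := by
    gcongr; exact min_one_pow_mul_factorial_mul_Gamma_le hs j
  rw [hcoeff, div_le_iff₀ (by positivity)]
  calc √(k ! * Real.Gamma (k + s)) ≤ k ! * √M ^ k * √(Real.Gamma s) := hnum
    _ = √M ^ k * (k.choose j * m⁻¹ ^ j) / √(Real.Gamma s) *
          (m ^ j * j ! * Real.Gamma s * (k - j)!) := by
        rw [Nat.cast_choose ℝ hjk, inv_pow]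
        field_simp
        rw [Real.sq_sqrt hΓ.le]
    _ ≤ _ := by gcongr

lemma norm_cpow_mul_norm_exp_mul_norm_pow_le {α : ℝ} {a : ℕ} (ha : α / 2 ≤ a) {w : ℂ}
    (hre : 0 ≤ w.re) (him : 1 ≤ w.im) (j : ℕ) :
    ‖w ^ ((α : ℂ) / 2)‖ * ‖Complex.exp (-w / 2)‖ * ‖w‖ ^ j ≤
      4 ^ (a + j) * a ! * j ! * Real.exp (1 / 2) * w.im ^ (a + j) := by
  have hyr : w.im ≤ ‖w‖ := (le_abs_self _).trans (Complex.abs_im_le_norm w)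
  have hr1 : 1 ≤ ‖w‖ := him.trans hyr
  have hr : ‖w‖ ≤ (1 + w.re) * w.im := by
    have := Complex.norm_le_abs_re_add_abs_im w
    rw [abs_of_nonneg hre, abs_of_nonneg (by linarith)] at this
    nlinarith
  have hcpow : ‖w ^ ((α : ℂ) / 2)‖ ≤ ‖w‖ ^ a := by
    rw [show (α : ℂ) / 2 = ((α / 2 : ℝ) : ℂ) by push_cast; ring, Complex.norm_cpow_real,
      ← Real.rpow_natCast]
    exact Real.rpow_le_rpow_of_exponent_le hr1 ha
  have hexp : ‖Complex.exp (-w / 2)‖ = Real.exp (-(w.re / 2)) := by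
    rw [Complex.norm_exp, neg_div, Complex.neg_re, Complex.div_ofNat_re]
  calc ‖w ^ ((α : ℂ) / 2)‖ * ‖Complex.exp (-w / 2)‖ * ‖w‖ ^ j
      ≤ ‖w‖ ^ a * Real.exp (-(w.re / 2)) * ‖w‖ ^ j := by rw [hexp]; gcongr
    _ = ‖w‖ ^ (a + j) * Real.exp (-(w.re / 2)) := by ring
    _ ≤ ((1 + w.re) * w.im) ^ (a + j) * Real.exp (-(w.re / 2)) := by gcongr
    _ = (1 + w.re) ^ (a + j) * Real.exp (-(w.re / 2)) * w.im ^ (a + j) := by rw [mul_pow]; ring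
    _ ≤ _ := mul_le_mul_of_nonneg_right (one_add_pow_mul_exp_neg_half_le hre a j) (by positivity)

theorem norm_phikC_le {α : ℝ} (hα : -1 < α) {a : ℕ} (ha : α / 2 ≤ a) :
    ∃ E > (0 : ℝ), ∃ F ≥ (1 : ℝ), ∀ w : ℂ, 0 ≤ w.re → 1 ≤ w.im → ∀ k : ℕ,
      ‖phikC α k w‖ ≤ E * F ^ k * w.im ^ (a + k) := by
  set m := min 1 (α + 1)
  have hm : 0 < m := lt_min one_pos (by linarith)
  have hΓ : 0 < Real.Gamma (α + 1) := Real.Gamma_pos_of_pos (by linarith)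
  have hM : 1 ≤ √(max 1 (α + 1)) := Real.one_le_sqrt.mpr (le_max_left _ _)
  refine ⟨4 ^ a * a ! * Real.exp (1 / 2) / √(Real.Gamma (α + 1)), by positivity,
    √(max 1 (α + 1)) * (4 * m⁻¹ + 1), one_le_mul_of_one_le_of_one_le hM (by
      linarith [show 0 ≤ 4 * m⁻¹ by positivity]), fun w hre him k => ?_⟩
  have hterm : ∀ j ∈ range (k + 1),
      |hkCoeff α k j| * (‖w ^ ((α : ℂ) / 2)‖ * ‖Complex.exp (-w / 2)‖ * ‖w‖ ^ j) ≤
        4 ^ a * a ! * Real.exp (1 / 2) / √(Real.Gamma (α + 1)) * √(max 1 (α + 1)) ^ k *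
          w.im ^ (a + k) * ((4 * m⁻¹) ^ j * 1 ^ (k - j) * k.choose j) := by
    intro j hj
    have hjk : j ≤ k := Nat.lt_succ_iff.mp (mem_range.mp hj)
    calc |hkCoeff α k j| * (‖w ^ ((α : ℂ) / 2)‖ * ‖Complex.exp (-w / 2)‖ * ‖w‖ ^ j)
        ≤ |hkCoeff α k j| * (4 ^ (a + j) * a ! * j ! * Real.exp (1 / 2) * w.im ^ (a + k)) := by
          refine mul_le_mul_of_nonneg_left
            ((norm_cpow_mul_norm_exp_mul_norm_pow_le ha hre him j).trans ?_) (abs_nonneg _)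
          gcongr
      _ = |hkCoeff α k j| * j ! * (4 ^ (a + j) * a ! * Real.exp (1 / 2) * w.im ^ (a + k)) := by
          ring
      _ ≤ √(max 1 (α + 1)) ^ k * (k.choose j * m⁻¹ ^ j) / √(Real.Gamma (α + 1)) *
            (4 ^ (a + j) * a ! * Real.exp (1 / 2) * w.im ^ (a + k)) := by
          gcongr; exact abs_hkCoeff_mul_factorial_le hα hjk
      _ = _ := by ring
  calc ‖phikC α k w‖
      = ‖w ^ ((α : ℂ) / 2)‖ * ‖Complex.exp (-w / 2)‖ * ‖hkC α k w‖ := by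
        rw [phikC, norm_mul, norm_mul]
    _ ≤ ‖w ^ ((α : ℂ) / 2)‖ * ‖Complex.exp (-w / 2)‖ *
          ∑ j ∈ range (k + 1), |hkCoeff α k j| * ‖w‖ ^ j := by
        gcongr; exact norm_hkC_le α k w
    _ = ∑ j ∈ range (k + 1),
          |hkCoeff α k j| * (‖w ^ ((α : ℂ) / 2)‖ * ‖Complex.exp (-w / 2)‖ * ‖w‖ ^ j) := by
        rw [mul_sum]; exact sum_congr rfl fun j _ => by ring
    _ ≤ _ := sum_le_sum hterm
    _ = _ := by rw [← mul_sum, ← add_pow, mul_pow]; ring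

lemma norm_KNC_le {α : ℝ} {N : ℕ} {z w : ℂ} {B₁ B₂ : ℝ}
    (h₁ : ∀ k < N, ‖phikC α k z‖ ≤ B₁) (h₂ : ∀ k < N, ‖phikC α k w‖ ≤ B₂) :
    ‖KNC α N z w‖ ≤ N * (B₁ * B₂) := by
  calc ‖KNC α N z w‖ ≤ ∑ k ∈ range N, ‖phikC α k z * phikC α k w‖ := norm_sum_le _ _
    _ ≤ ∑ _k ∈ range N, B₁ * B₂ := sum_le_sum fun k hk => by
        have hkN := mem_range.mp hk
        rw [norm_mul]
        exact mul_le_mul (h₁ k hkN) (h₂ k hkN) (norm_nonneg _) ((norm_nonneg _).trans (h₁ k hkN))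
    _ = N * (B₁ * B₂) := by rw [sum_const, card_range, nsmul_eq_mul]

lemma norm_KNS_inv_ofReal (α : ℝ) (N : ℕ) (z w : ℂ) {β : ℝ} (hβ : 0 ≤ β) :
    ‖KNS α N z w (β : ℂ)⁻¹‖ = β * ‖KNC α N (β * z) (β * w)‖ := by
  rw [KNS, inv_inv, div_inv_eq_mul, div_inv_eq_mul, norm_mul, Complex.norm_real,
    Real.norm_of_nonneg hβ, mul_comm z, mul_comm w]

lemma pow_le_rpow_add_half_div_sqrt {μ y : ℝ} (hμ : 0 < μ) (hy : μ ≤ y) (P : ℕ) :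
    y ^ P ≤ y ^ ((P : ℝ) + 1 / 2) / √μ := by
  rw [le_div_iff₀ (Real.sqrt_pos.mpr hμ), Real.rpow_add (hμ.trans_le hy), Real.rpow_natCast,
    ← Real.sqrt_eq_rpow]
  exact mul_le_mul_of_nonneg_left (Real.sqrt_le_sqrt hy) (pow_nonneg (hμ.le.trans hy) P)

lemma mul_pow_le_mul_exp_one_pow_mul_factorial {c : ℝ} (hc : 0 ≤ c) (n : ℕ) :
    (c * n) ^ n ≤ (c * Real.exp 1) ^ n * n ! := by
  have h := Real.pow_div_factorial_le_exp _ (Nat.cast_nonneg n) n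
  rw [div_le_iff₀ (by positivity), ← Real.exp_one_pow] at h
  rw [mul_pow, mul_pow, mul_assoc]
  gcongr

lemma four_mul_succ_pow_le {a : ℕ} (ha : 1 ≤ a) (n : ℕ) :
    (4 * ((n + 1 : ℕ) : ℝ)) ^ (2 * (a + n) + 1) ≤
      4 * (2 * Real.exp 1) ^ (2 * a) * (4 * Real.exp 1) ^ (2 * n) * (2 * (a + n))! := by
  have hlin : 4 * ((n + 1 : ℕ) : ℝ) ≤ 2 * ((2 * (a + n) : ℕ) : ℝ) := by
    have : (1 : ℝ) ≤ a := by exact_mod_cast ha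
    push_cast; linarith
  have hsucc : ((n + 1 : ℕ) : ℝ) ≤ 2 ^ (2 * n) := by
    calc ((n + 1 : ℕ) : ℝ) ≤ 2 ^ n := by exact_mod_cast Nat.lt_two_pow_self
      _ ≤ 2 ^ (2 * n) := pow_le_pow_right₀ one_le_two (by omega)
  calc (4 * ((n + 1 : ℕ) : ℝ)) ^ (2 * (a + n) + 1)
      = 4 * ((n + 1 : ℕ) : ℝ) * (4 * ((n + 1 : ℕ) : ℝ)) ^ (2 * (a + n)) := by ring
    _ ≤ 4 * 2 ^ (2 * n) * ((2 * Real.exp 1) ^ (2 * (a + n)) * (2 * (a + n))!) := by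
        gcongr ?_ * ?_
        · linarith
        · exact (pow_le_pow_left₀ (by positivity) hlin _).trans
            (mul_pow_le_mul_exp_one_pow_mul_factorial zero_le_two _)
    _ = _ := by
        rw [mul_pow 4, show (4 : ℝ) ^ (2 * n) = 2 ^ (2 * n) * 2 ^ (2 * n) by rw [← mul_pow]; norm_num]
        ring

theorem exists_norm_KNS_inv_le {α μ : ℝ} (hα : -1 < α) (hμ : 0 < μ) {a : ℕ} (ha1 : 1 ≤ a)
    (ha : α / 2 ≤ a) :
    ∃ C > (0 : ℝ), ∃ Ω > (0 : ℝ), ∀ n : ℕ, 1 ≤ 4 * ((n + 1 : ℕ) : ℝ) * μ →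
      ∀ z₁ z₂ : ℂ, 0 ≤ z₁.re → 0 ≤ z₂.re → μ ≤ z₁.im → μ ≤ z₂.im →
        ((n + 1 : ℕ) : ℝ)⁻¹ * ‖KNS α (n + 1) z₁ z₂ ((4 * ((n + 1 : ℕ) : ℝ) : ℝ) : ℂ)⁻¹‖ ≤
          C * Ω ^ (2 * n) * (2 * (a + n))! *
            z₁.im ^ (((a + n : ℕ) : ℝ) + 1 / 2) * z₂.im ^ (((a + n : ℕ) : ℝ) + 1 / 2) := by
  obtain ⟨E, hE, F, hF, hφ⟩ := norm_phikC_le hα ha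
  refine ⟨4 * (2 * Real.exp 1) ^ (2 * a) * E ^ 2 / μ, by positivity,
    4 * Real.exp 1 * F, by positivity, fun n hβμ z₁ z₂ hre₁ hre₂ him₁ him₂ => ?_⟩
  set β : ℝ := 4 * ((n + 1 : ℕ) : ℝ)
  have hside : ∀ z : ℂ, 0 ≤ z.re → μ ≤ z.im → ∀ k < n + 1, ‖phikC α k (β * z)‖ ≤
      E * F ^ n * β ^ (a + n) * (z.im ^ (((a + n : ℕ) : ℝ) + 1 / 2) / √μ) := by
    intro z hre him k hk
    have hw : 1 ≤ (β * z).im := by rw [Complex.im_ofReal_mul]; nlinarith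
    calc ‖phikC α k (β * z)‖ ≤ E * F ^ k * (β * z).im ^ (a + k) :=
          hφ _ (by rw [Complex.re_ofReal_mul]; positivity) hw k
      _ ≤ E * F ^ n * (β * z).im ^ (a + n) := by gcongr <;> omega
      _ = E * F ^ n * β ^ (a + n) * z.im ^ (a + n) := by
          rw [Complex.im_ofReal_mul, mul_pow]; ring
      _ ≤ _ := by gcongr; exact pow_le_rpow_add_half_div_sqrt hμ him _
  have hy₁ := Real.rpow_nonneg (hμ.le.trans him₁) (((a + n : ℕ) : ℝ) + 1 / 2)
  have hy₂ := Real.rpow_nonneg (hμ.le.trans him₂) (((a + n : ℕ) : ℝ) + 1 / 2)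
  rw [norm_KNS_inv_ofReal _ _ _ _ (by positivity)]
  calc ((n + 1 : ℕ) : ℝ)⁻¹ * (β * ‖KNC α (n + 1) (β * z₁) (β * z₂)‖)
      ≤ ((n + 1 : ℕ) : ℝ)⁻¹ * (β * ((n + 1 : ℕ) *
          ((E * F ^ n * β ^ (a + n) * (z₁.im ^ (((a + n : ℕ) : ℝ) + 1 / 2) / √μ)) *
            (E * F ^ n * β ^ (a + n) * (z₂.im ^ (((a + n : ℕ) : ℝ) + 1 / 2) / √μ))))) := by
        gcongr; exact norm_KNC_le (hside z₁ hre₁ him₁) (hside z₂ hre₂ him₂)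
    _ = β ^ (2 * (a + n) + 1) * (E ^ 2 * F ^ (2 * n) / μ) *
          z₁.im ^ (((a + n : ℕ) : ℝ) + 1 / 2) * z₂.im ^ (((a + n : ℕ) : ℝ) + 1 / 2) := by
        field_simp; rw [Real.sq_sqrt hμ.le]; ring
    _ ≤ 4 * (2 * Real.exp 1) ^ (2 * a) * (4 * Real.exp 1) ^ (2 * n) * (2 * (a + n))! *
          (E ^ 2 * F ^ (2 * n) / μ) *
          z₁.im ^ (((a + n : ℕ) : ℝ) + 1 / 2) * z₂.im ^ (((a + n : ℕ) : ℝ) + 1 / 2) := by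
        gcongr ?_ * _ * _ * _
        exact four_mul_succ_pow_le ha1 n
    _ = _ := by ring

lemma exists_natCast_eq_floor_add_two {α : ℝ} (hα : -1 < α) :
    ∃ a : ℕ, 1 ≤ a ∧ α / 2 ≤ a ∧ (a : ℤ) = ⌊(α - 1) / 2⌋ + 2 := by
  have hfloor : (-1 : ℤ) ≤ ⌊(α - 1) / 2⌋ := Int.le_floor.mpr (by push_cast; linarith)
  refine ⟨(⌊(α - 1) / 2⌋ + 2).toNat, by omega, ?_, Int.toNat_of_nonneg (by omega)⟩
  have hcast : (((⌊(α - 1) / 2⌋ + 2).toNat : ℤ) : ℝ) = ⌊(α - 1) / 2⌋ + 2 := by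
    rw [Int.toNat_of_nonneg (by omega)]; push_cast; ring
  rw [Int.cast_natCast] at hcast
  linarith [Int.sub_one_lt_floor ((α - 1) / 2)]

/-- uniform upper bound for the rescaled LUE correlation kernel in the upper
half plane, with `P = N + ⌊(α−1)/2⌋ + 1`. -/
theorem kernel_upper_bound (α : ℝ) (hα : -1 < α) (μ : ℝ) (hμ : 0 < μ) :
    ∃ C > (0 : ℝ), ∃ Ω > (0 : ℝ), ∀ N : ℕ, 1 / (4 * μ) ≤ (N : ℝ) →
      ∀ z₁ z₂ : ℂ, 0 < z₁.re → 0 < z₂.re → μ ≤ z₁.im → μ ≤ z₂.im →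
        (N : ℝ)⁻¹ * ‖KNS α N z₁ z₂ (((4 * (N : ℝ) : ℝ) : ℂ))⁻¹‖ ≤
          C * Ω ^ (2 * N - 2) *
            Real.Gamma (2 * (((N : ℤ) + ⌊(α - 1) / 2⌋ + 1 : ℤ) : ℝ) + 1) *
            z₁.im ^ ((((N : ℤ) + ⌊(α - 1) / 2⌋ + 1 : ℤ) : ℝ) + 1 / 2) *
            z₂.im ^ ((((N : ℤ) + ⌊(α - 1) / 2⌋ + 1 : ℤ) : ℝ) + 1 / 2) := by
  obtain ⟨a, ha1, haα, ha⟩ := exists_natCast_eq_floor_add_two hα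
  obtain ⟨C, hC, Ω, hΩ, hbound⟩ := exists_norm_KNS_inv_le hα hμ ha1 haα
  refine ⟨C, hC, Ω, hΩ, fun N hN z₁ z₂ hre₁ hre₂ him₁ him₂ => ?_⟩
  obtain ⟨n, rfl⟩ : ∃ n, N = n + 1 :=
    Nat.exists_eq_add_one.mpr (Nat.cast_pos.mp ((by positivity : 0 < 1 / (4 * μ)).trans_le hN))
  have hP : (((n + 1 : ℕ) : ℤ) + ⌊(α - 1) / 2⌋ + 1 : ℤ) = ((a + n : ℕ) : ℤ) := by
    push_cast; omega
  rw [hP, Int.cast_natCast,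
    show 2 * ((a + n : ℕ) : ℝ) + 1 = ((2 * (a + n) : ℕ) : ℝ) + 1 by push_cast; ring,
    Real.Gamma_nat_eq_factorial, show 2 * (n + 1) - 2 = 2 * n by omega]
  rw [div_le_iff₀ (by positivity)] at hN
  exact hbound n (by linarith) z₁ z₂ hre₁.le hre₂.le him₁ him₂

end RMT
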